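/- arXiv:1909.09916 — 2 statements merged into one kernel-verified Lean document; each statement's English description precedes it below -/
import Mathlib

section
/- Let G be a finite connected bipartite simple graph and let P = (v_0, …, v_k) be a path in G that is geodesically closed with respect to G. In the game of Surrounding Cops and Robbers on G, a single cop has a strategy such that, against every robber play, after a finite number of moves the robber is unable to enter P from outside of P: from some time onward, whenever the robber does not occupy a vertex of P, his next move cannot be to a vertex of P. -/
/-!
Formalization of the game of Surrounding Cops and Robbers, played on a simple
graph `G` by a cop player controlling `m` cops and a robber player controlling
one robber, with perfect information.  The cops are placed first, then the
robber is placed on a vertex not occupied by a cop; thereafter players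
alternate turns (cops first), each pawn moving along an edge or staying put,
and the robber may never end his turn on a vertex occupied by a cop.  The cop
player wins if at some point every neighbor of the robber's vertex is occupied
by a cop.
-/

/-- One step of a cop or of the robber: stay in place or move along an edge. -/
def stepRel {V : Type*} (G : SimpleGraph V) (x y : V) : Prop := x = y ∨ G.Adj x y

/-- `histList r t = [r 0, r 1, …, r (t-1)]`: the robber's first `t` positions. -/
def histList {V : Type*} (r : ℕ → V) (t : ℕ) : List V := (List.range t).map r

/-- A cop strategy for `m` cops is a function `F` assigning to each finite history of
robber positions the current positions of the cops; `F []` is the initial placement,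
made before the robber is placed, and `F (h ++ [x])` is the cops' answer after the
robber history `h` has been extended by the robber move `x`.  The strategy is valid
if each cop always moves along an edge or stays put. -/
def ValidCopStrategy {V : Type*} (G : SimpleGraph V) {m : ℕ}
    (F : List V → Fin m → V) : Prop :=
  ∀ (h : List V) (x : V) (i : Fin m), stepRel G (F h i) (F (h ++ [x]) i)

/-- An infinite robber play `r` against the cop strategy `F` is legal if the robber
always moves along an edge or stays put, and never ends a turn on a vertex occupied
by a cop (`r 0` is the robber's initial placement, chosen after the cops have been
placed at `F []`, and `r t` is chosen when the cops stand at `F (histList r t)`). -/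
def LegalPlay {V : Type*} (G : SimpleGraph V) {m : ℕ}
    (F : List V → Fin m → V) (r : ℕ → V) : Prop :=
  (∀ t, stepRel G (r t) (r (t + 1))) ∧ ∀ t, ∀ i, F (histList r t) i ≠ r t

/-- The robber is surrounded at time `t`: after the cops' move in round `t + 1`,
every neighbor of the robber's position `r t` is occupied by a cop. -/
def SurroundedAt {V : Type*} (G : SimpleGraph V) {m : ℕ}
    (F : List V → Fin m → V) (r : ℕ → V) (t : ℕ) : Prop :=
  ∀ w, G.Adj (r t) w → ∃ i, F (histList r (t + 1)) i = w

/-- `m` cops have a winning strategy in the game of Surrounding Cops and Robbers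
on `G`; equivalently, the surrounding cop number satisfies `s(G) ≤ m`. -/
def CopsWin {V : Type*} (G : SimpleGraph V) (m : ℕ) : Prop :=
  ∃ F : List V → Fin m → V, ValidCopStrategy G F ∧
    ∀ r : ℕ → V, LegalPlay G F r → ∃ t, SurroundedAt G F r t

/-- A path `p` in `G` is geodesically closed with respect to `G` if for all vertices
`u, v` of `p`, every geodesic `(u,v)`-path in `G` is a subgraph of `p`
(all its vertices and edges belong to `p`). -/
def GeodesicallyClosedPath {V : Type*} (G : SimpleGraph V) {v0 vk : V}
    (p : G.Walk v0 vk) : Prop :=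
  ∀ u v : V, u ∈ p.support → v ∈ p.support →
    ∀ q : G.Walk u v, q.IsPath → q.length = G.dist u v →
      (∀ x ∈ q.support, x ∈ p.support) ∧ ∀ e ∈ q.edges, e ∈ p.edges

/-!
The cop walks along `p` from `v0`, always stepping towards the vertex of `p` whose distance
to `v0` is one less than the robber's. This target moves by at most one per round and never
leaves `p`, so the cop reaches it within `p.length` rounds and follows it from then on. In a
bipartite graph, a vertex outside the geodesically closed path `p` that is adjacent to
`p.getVert i` is at distance exactly `i + 1` from `v0`; so whenever the robber could step onto
`p.getVert i`, the cop already stands there.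
-/

open SimpleGraph Walk

namespace SimpleGraph

variable {V : Type*} {G : SimpleGraph V}

lemma Walk.IsPath.le_succ_of_mk_getVert_mem_edges {u v : V} {p : G.Walk u v} (hp : p.IsPath)
    {i j : ℕ} (hi : i ≤ p.length) (hj : j ≤ p.length)
    (he : s(p.getVert i, p.getVert j) ∈ p.edges) : j ≤ i + 1 := by
  obtain ⟨m, hm, hme⟩ := p.mk_mem_edges_iff_exists.mp he
  have hm' : m + 1 ≤ p.length := hm
  rcases Sym2.eq_iff.mp hme with ⟨h1, h2⟩ | ⟨h1, h2⟩
  · have := hp.getVert_injOn (show m ≤ p.length by omega) hi h1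
    have := hp.getVert_injOn hm' hj h2
    omega
  · have := hp.getVert_injOn (show m ≤ p.length by omega) hj h1
    have := hp.getVert_injOn hm' hi h2
    omega

lemma Walk.IsPath.le_add_length_of_edges_subset {u v : V} {p : G.Walk u v} (hp : p.IsPath)
    {a b : V} (w : G.Walk a b) (hw : ∀ e ∈ w.edges, e ∈ p.edges) {i j : ℕ}
    (hi : i ≤ p.length) (hj : j ≤ p.length) (ha : p.getVert i = a) (hb : p.getVert j = b) :
    j ≤ i + w.length := by
  induction w generalizing i with
  | nil =>
    have := hp.getVert_injOn hi hj (ha.trans hb.symm)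
    simp [this]
  | @cons a c b hac w ih =>
    have hedge : s(a, c) ∈ p.edges := hw _ (by simp)
    obtain ⟨m, hmc, hm⟩ := mem_support_iff_exists_getVert.mp (p.snd_mem_support_of_mem_edges hedge)
    have hmi := hp.le_succ_of_mk_getVert_mem_edges hi hm (ha ▸ hmc ▸ hedge)
    have := ih (fun e he => hw e (by simp [he])) hm hmc hb
    simp only [length_cons]
    omega

lemma dist_ne_of_adj_of_colorable_two (hbip : G.Colorable 2) {u x y : V} (hr : G.Reachable u x)
    (hxy : G.Adj x y) : G.dist u x ≠ G.dist u y := by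
  obtain ⟨wx, hwx⟩ := hr.exists_walk_length_eq_dist
  obtain ⟨wy, hwy⟩ := (hr.trans hxy.reachable).exists_walk_length_eq_dist
  have heven := two_colorable_iff_forall_loop_even.mp hbip u ((wx.concat hxy).append wy.reverse)
  rw [length_append, length_concat, length_reverse, hwx, hwy] at heven
  intro h
  rw [h] at heven
  exact Nat.not_even_iff_odd.mpr (by simp) heven

end SimpleGraph

namespace GeodesicallyClosedPath

variable {V : Type*} {G : SimpleGraph V} {v0 vk : V} {p : G.Walk v0 vk}

lemma dist_getVert (hp : p.IsPath) (hc : GeodesicallyClosedPath G p) {i : ℕ}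
    (hi : i ≤ p.length) : G.dist v0 (p.getVert i) = i := by
  have hle : G.dist v0 (p.getVert i) ≤ i := by
    simpa [hi] using dist_le (p.take i)
  obtain ⟨q, hq, hqlen⟩ := (p.take i).reachable.exists_path_of_dist
  have hsub := (hc v0 _ p.start_mem_support (p.getVert_mem_support i) q hq hqlen).2
  have := hp.le_add_length_of_edges_subset q hsub (Nat.zero_le _) hi p.getVert_zero rfl
  omega

lemma dist_eq_succ_of_adj_getVert (hbip : G.Colorable 2) (hp : p.IsPath)
    (hc : GeodesicallyClosedPath G p) {x : V} (hx : x ∉ p.support) {i : ℕ}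
    (hi : i ≤ p.length) (hadj : G.Adj x (p.getVert i)) : G.dist v0 x = i + 1 := by
  have hreach : G.Reachable v0 x := (p.take i).reachable.trans hadj.symm.reachable
  have hdi := hc.dist_getVert hp hi
  have hne := dist_ne_of_adj_of_colorable_two hbip hreach hadj
  rcases hadj.diff_dist_adj (u := v0) with h | h | h
  · omega
  · -- a geodesic to `x` followed by the edge to `p.getVert i` would be a geodesic leaving `p`
    obtain ⟨w, hw⟩ := hreach.exists_walk_length_eq_dist
    have hlen : (w.concat hadj).length = G.dist v0 (p.getVert i) := by
      rw [length_concat]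
      omega
    have hgeod := hc v0 _ p.start_mem_support (p.getVert_mem_support i) _
      ((w.concat hadj).isPath_of_length_eq_dist hlen) hlen
    exact absurd (hgeod.1 x (by simp [support_concat])) hx
  · omega

end GeodesicallyClosedPath

def stepToward (a b : ℕ) : ℕ := if a < b then a + 1 else if b < a then a - 1 else a

lemma exists_forall_stepToward_pursuit_eq {s a : ℕ → ℕ} {k : ℕ}
    (hs : ∀ t, s (t + 1) ≤ s t + 1 ∧ s t ≤ s (t + 1) + 1) (hk : ∀ t, s t ≤ k)
    (h0 : a 0 ≤ s 0) (ha : ∀ t, a (t + 1) = stepToward (a t) (s t)) :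
    ∃ T, ∀ t, T ≤ t → a (t + 1) = s t := by
  have behind : ∀ t, a (t + 1) ≤ s t := by
    intro t
    induction t with
    | zero => rw [ha]; unfold stepToward; split_ifs <;> omega
    | succ t ih => have := hs t; rw [ha]; unfold stepToward; split_ifs <;> omega
  have keeps : ∀ t, a (t + 1) = s t → a (t + 2) = s (t + 1) := by
    intro t h
    have := hs t; rw [ha]; unfold stepToward; split_ifs <;> omega
  have catches : ∃ T, a (T + 1) = s T := by
    by_contra! hne
    have gains : ∀ t, t ≤ a (t + 1) := by
      intro t
      induction t with
      | zero => omega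
      | succ t ih =>
        have hlag : a (t + 1) < s t := lt_of_le_of_ne (behind t) (hne t)
        have hstep : a (t + 1 + 1) = stepToward (a (t + 1)) (s (t + 1)) := ha (t + 1)
        have := hne (t + 1); have := hs t
        unfold stepToward at hstep; split_ifs at hstep <;> omega
    have := (gains (k + 1)).trans (behind (k + 1))
    have := hk (k + 1)
    omega
  obtain ⟨T, hT⟩ := catches
  exact ⟨T, fun t ht => Nat.le_induction hT (fun n _ ih => keeps n ih) t ht⟩

section

variable {V : Type*} {G : SimpleGraph V} {v0 vk : V}

lemma stepRel_symm {x y : V} (h : stepRel G x y) : stepRel G y x :=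
  h.imp Eq.symm G.adj_symm

lemma stepRel_getVert_succ (p : G.Walk v0 vk) (n : ℕ) :
    stepRel G (p.getVert n) (p.getVert (n + 1)) := by
  rcases lt_or_ge n p.length with h | h
  · exact Or.inr (p.adj_getVert_succ h)
  · exact Or.inl (by rw [p.getVert_of_length_le h, p.getVert_of_length_le (by omega)])

lemma stepRel_getVert_stepToward (p : G.Walk v0 vk) (a b : ℕ) :
    stepRel G (p.getVert a) (p.getVert (stepToward a b)) := by
  unfold stepToward
  split_ifs with h1 h2
  · exact stepRel_getVert_succ p a
  · obtain ⟨n, rfl⟩ : ∃ n, a = n + 1 := ⟨a - 1, by omega⟩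
    rw [Nat.add_sub_cancel]
    exact stepRel_symm (stepRel_getVert_succ p n)
  · exact Or.inl rfl

end

section GuardStrategy

variable {V : Type*} {G : SimpleGraph V} {v0 vk : V}

variable (G) in
noncomputable def shadowIndex (p : G.Walk v0 vk) (x : V) : ℕ := min (G.dist v0 x - 1) p.length

variable (G) in
noncomputable def guardIndex (p : G.Walk v0 vk) (h : List V) : ℕ :=
  h.foldl (fun a x => stepToward a (shadowIndex G p x)) 0

variable (G) in
noncomputable def guardStrategy (p : G.Walk v0 vk) : List V → Fin 1 → V :=
  fun h _ => p.getVert (guardIndex G p h)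

lemma guardStrategy_valid (p : G.Walk v0 vk) : ValidCopStrategy G (guardStrategy G p) := by
  intro h x _
  simp only [guardStrategy, guardIndex, List.foldl_append, List.foldl_cons, List.foldl_nil]
  exact stepRel_getVert_stepToward p _ _

lemma guardIndex_histList_succ (p : G.Walk v0 vk) (r : ℕ → V) (t : ℕ) :
    guardIndex G p (histList r (t + 1)) =
      stepToward (guardIndex G p (histList r t)) (shadowIndex G p (r t)) := by
  simp [guardIndex, histList, List.range_succ]

lemma shadowIndex_le_succ_of_stepRel (p : G.Walk v0 vk) {x y : V} (h : stepRel G x y) :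
    shadowIndex G p y ≤ shadowIndex G p x + 1 := by
  unfold shadowIndex
  rcases h with rfl | h
  · omega
  · rcases h.diff_dist_adj (u := v0) with h | h | h <;> omega

end GuardStrategy

theorem one_cop_guards_geodesically_closed_bipartite_general {V : Type*}
    (G : SimpleGraph V) (hbip : G.Colorable 2)
    {v0 vk : V} (p : G.Walk v0 vk) (hpath : p.IsPath)
    (hclosed : GeodesicallyClosedPath G p) :
    ∃ F : List V → Fin 1 → V, ValidCopStrategy G F ∧
      ∀ r : ℕ → V, LegalPlay G F r →
        ∃ T : ℕ, ∀ t, T ≤ t → r t ∉ p.support → r (t + 1) ∉ p.support := by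
  refine ⟨guardStrategy G p, guardStrategy_valid p, fun r hr => ?_⟩
  obtain ⟨T, hT⟩ := exists_forall_stepToward_pursuit_eq (k := p.length)
    (s := fun t => shadowIndex G p (r t)) (a := fun t => guardIndex G p (histList r t))
    (fun t => ⟨shadowIndex_le_succ_of_stepRel p (hr.1 t),
      shadowIndex_le_succ_of_stepRel p (stepRel_symm (hr.1 t))⟩)
    (fun t => min_le_right _ _) (Nat.zero_le _) (guardIndex_histList_succ p r)
  refine ⟨T, fun t ht hout hin => ?_⟩
  obtain ⟨i, hri, hi⟩ := mem_support_iff_exists_getVert.mp hin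
  have hadj : G.Adj (r t) (p.getVert i) :=
    hri ▸ (hr.1 t).resolve_left fun h => hout (h ▸ hin)
  have hshadow : shadowIndex G p (r t) = i := by
    rw [shadowIndex, hclosed.dist_eq_succ_of_adj_getVert hbip hpath hout hi hadj]
    omega
  exact hr.2 (t + 1) 0 (by simp only [guardStrategy, hT t ht, hshadow, hri])

/-- Let `G` be a finite connected bipartite simple graph and let
`P = (v_0, …, v_k)` be a path in `G` that is geodesically closed with respect to `G`.
In the game of Surrounding Cops and Robbers on `G`, a single cop has a strategy such
that, against every robber play, after a finite number of moves the robber is unable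
to enter `P` from outside of `P`: from some time onward, whenever the robber does not
occupy a vertex of `P`, his next move is not to a vertex of `P`. -/
theorem one_cop_guards_geodesically_closed_bipartite {V : Type*} [Fintype V]
    (G : SimpleGraph V) (hconn : G.Connected) (hbip : G.Colorable 2)
    {v0 vk : V} (p : G.Walk v0 vk) (hpath : p.IsPath)
    (hclosed : GeodesicallyClosedPath G p) :
    ∃ F : List V → Fin 1 → V, ValidCopStrategy G F ∧
      ∀ r : ℕ → V, LegalPlay G F r →
        ∃ T : ℕ, ∀ t, T ≤ t → r t ∉ p.support → r (t + 1) ∉ p.support :=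
  one_cop_guards_geodesically_closed_bipartite_general G hbip p hpath hclosed
end

section
/- Let H be a finite connected simple graph of minimum degree at least 5, and let G be the 1-subdivision of H. Then s(G) ≥ 4; that is, three cops do not suffice to surround the robber on G. -/
/-- The 1-subdivision of a graph `H`: every edge `uv` of `H` is replaced by a path
`u – w_{uv} – v` through a new vertex `w_{uv}`.  Its vertices are the vertices of `H`
together with the edges of `H`, and an original vertex `u` is adjacent to a
subdivision vertex `e` exactly when `u` is an endpoint of `e`. -/
def oneSubdivision {V : Type*} (H : SimpleGraph V) : SimpleGraph (V ⊕ H.edgeSet) :=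
  SimpleGraph.fromRel (fun a b =>
    match a, b with
    | Sum.inl u, Sum.inr e => u ∈ (e : Sym2 V)
    | _, _ => False)

/-!
The robber keeps to *safe* positions: an original vertex that no cop occupies, or a
subdivision vertex `w_{uv}` such that no cop can reach `v` in one move.  On a safe original
vertex `u` the robber cannot be surrounded, since its `deg u ≥ 5` neighbours outnumber the
cops; he stays there until a cop steps onto `u`.  In one move the other two cops can reach
at most four original vertices (a cop on `w_{xy}` reaches `x` and `y`), so some neighbour `v`
of `u` stays out of reach and the robber flees to `w_{uv}`, where he cannot be surrounded
either, and then on to `v`.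
-/

open Finset

section Game

variable {W : Type*} {G : SimpleGraph W} {m : ℕ}

variable (G) in
def Surrounds (c : Fin m → W) (x : W) : Prop := ∀ w, G.Adj x w → ∃ i, c i = w

theorem histList_succ {α : Type*} (r : ℕ → α) (t : ℕ) :
    histList r (t + 1) = histList r t ++ [r t] := by
  simp [histList, List.range_succ]

def historyOf (σ : List W → W) : ℕ → List W
  | 0 => []
  | t + 1 => historyOf σ t ++ [σ (historyOf σ t)]

theorem exists_eq_apply_histList (σ : List W → W) :
    ∃ r : ℕ → W, ∀ t, r t = σ (histList r t) := by
  have hhist (t : ℕ) : histList (fun t => σ (historyOf σ t)) t = historyOf σ t := by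
    induction t with
    | zero => rfl
    | succ t ih => rw [histList_succ, ih, historyOf]
  exact ⟨fun t => σ (historyOf σ t), fun t => by rw [hhist]⟩

-- `S c x`: the robber has just moved to `x`, facing cops at `c`.
theorem not_copsWin_of_invariant (S : (Fin m → W) → W → Prop)
    (start : ∀ c, ∃ x, S c x)
    (avoid : ∀ c x, S c x → ∀ i, c i ≠ x)
    (escape : ∀ c c' x, S c x → (∀ i, stepRel G (c i) (c' i)) →
      ¬ Surrounds G c' x ∧ ∃ x', stepRel G x x' ∧ S c' x') :
    ¬ CopsWin G m := by
  classical
  rintro ⟨F, hF, hwin⟩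
  obtain ⟨σ, hσ₀, hσ⟩ : ∃ σ : List W → W, S (F []) (σ []) ∧
      ∀ h x, (∃ x', stepRel G x x' ∧ S (F (h ++ [x])) x') →
        stepRel G x (σ (h ++ [x])) ∧ S (F (h ++ [x])) (σ (h ++ [x])) := by
    refine ⟨fun h => match h.getLast? with
      | none => (start (F [])).choose
      | some x => if hx : ∃ x', stepRel G x x' ∧ S (F h) x' then hx.choose else x,
      (start _).choose_spec, fun h x hx => ?_⟩
    simp only [List.getLast?_concat, dif_pos hx]
    exact hx.choose_spec
  obtain ⟨r, hr⟩ := exists_eq_apply_histList σ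
  have hcops (t : ℕ) : ∀ i, stepRel G (F (histList r t) i) (F (histList r (t + 1)) i) := by
    rw [histList_succ]; exact hF _ _
  have hreply (t : ℕ) (hx : ∃ x', stepRel G (r t) x' ∧ S (F (histList r (t + 1))) x') :
      stepRel G (r t) (r (t + 1)) ∧ S (F (histList r (t + 1))) (r (t + 1)) := by
    have := hσ (histList r t) (r t)
    rw [← histList_succ, ← hr] at this
    exact this hx
  have hinv (t : ℕ) : S (F (histList r t)) (r t) := by
    induction t with
    | zero => rw [hr]; exact hσ₀
    | succ t ih => exact (hreply t (escape _ _ _ ih (hcops t)).2).2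
  obtain ⟨t, ht⟩ := hwin r ⟨fun t => (hreply t (escape _ _ _ (hinv t) (hcops t)).2).1,
    fun t => avoid _ _ (hinv t)⟩
  exact (escape _ _ _ (hinv t) (hcops t)).1 ht

end Game

namespace oneSubdivision

variable {V : Type*} {H : SimpleGraph V} {m : ℕ}

@[simp]
theorem adj_inl_inr {u : V} {e : H.edgeSet} :
    (oneSubdivision H).Adj (Sum.inl u) (Sum.inr e) ↔ u ∈ (e : Sym2 V) := by
  simp [oneSubdivision]

@[simp]
theorem adj_inr_inl {u : V} {e : H.edgeSet} :
    (oneSubdivision H).Adj (Sum.inr e) (Sum.inl u) ↔ u ∈ (e : Sym2 V) := by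
  simp [oneSubdivision]

@[simp]
theorem not_adj_inl_inl {u v : V} : ¬ (oneSubdivision H).Adj (Sum.inl u) (Sum.inl v) := by
  simp [oneSubdivision]

theorem stepRel_inl_inl {u v : V} :
    stepRel (oneSubdivision H) (Sum.inl u) (Sum.inl v) ↔ u = v := by
  simp [stepRel]

theorem stepRel_inr_inl {e : H.edgeSet} {v : V} :
    stepRel (oneSubdivision H) (Sum.inr e) (Sum.inl v) ↔ v ∈ (e : Sym2 V) := by
  simp [stepRel]

theorem exists_card_le_two_of_stepRel (p : V ⊕ H.edgeSet) :
    ∃ s : Finset V, #s ≤ 2 ∧ ∀ v, stepRel (oneSubdivision H) p (.inl v) → v ∈ s := by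
  classical
  rcases p with w | ⟨e, he⟩
  · exact ⟨{w}, by simp, fun v hv => by simpa [stepRel_inl_inl, eq_comm] using hv⟩
  · induction e using Sym2.ind with
    | _ a b => exact ⟨{a, b}, card_le_two, fun v hv => by simpa [stepRel_inr_inl] using hv⟩

def RobberSafe (c : Fin m → V ⊕ H.edgeSet) : V ⊕ H.edgeSet → Prop
  | .inl u => ∀ i, c i ≠ .inl u
  | .inr e => ∃ v ∈ (e : Sym2 V), ∀ i, ¬ stepRel (oneSubdivision H) (c i) (.inl v)

theorem RobberSafe.ne {c : Fin m → V ⊕ H.edgeSet} {x : V ⊕ H.edgeSet} (h : RobberSafe c x)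
    (i : Fin m) : c i ≠ x := by
  rcases x with u | e
  · exact h i
  · obtain ⟨v, hv, hsafe⟩ := h
    intro hi
    exact hsafe i (hi ▸ stepRel_inr_inl.2 hv)

variable [Fintype V] [DecidableRel H.Adj]

theorem degree_le_of_surrounds {c : Fin m → V ⊕ H.edgeSet} {u : V}
    (hs : Surrounds (oneSubdivision H) c (.inl u)) : H.degree u ≤ m := by
  classical
  have hsub : H.incidenceFinset u ⊆
      ((univ.image c).toRight).map (Function.Embedding.subtype _) := by
    intro e he
    rw [SimpleGraph.mem_incidenceFinset] at he
    obtain ⟨i, hi⟩ := hs (.inr ⟨e, he.1⟩) (adj_inl_inr.2 he.2)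
    simp only [mem_map, mem_toRight, mem_image]
    exact ⟨⟨e, he.1⟩, ⟨i, mem_univ _, hi⟩, rfl⟩
  calc H.degree u = #(H.incidenceFinset u) := (H.card_incidenceFinset_eq_degree u).symm
    _ ≤ #(univ.image c) := (card_le_card hsub).trans (by simpa using card_toRight_le)
    _ ≤ m := card_image_le.trans (by simp)


theorem exists_forall_ne_inl (hm : 0 < m) (hdeg : ∀ v, m < H.degree v)
    (c : Fin m → V ⊕ H.edgeSet) : ∃ u, ∀ i, c i ≠ .inl u := by
  by_contra! h
  choose f hf using h
  have hf_inj : Function.Injective f := fun a b hab =>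
    Sum.inl_injective ((hf a).symm.trans (hab ▸ hf b))
  obtain ⟨v⟩ : Nonempty V := by
    rcases c ⟨0, hm⟩ with u | ⟨e, -⟩
    · exact ⟨u⟩
    · induction e using Sym2.ind with | _ a _ => exact ⟨a⟩
  have := (hdeg v).trans <|
    (H.degree_lt_card_verts v).trans_le (Fintype.card_le_of_injective f hf_inj)
  simp at this

theorem exists_adj_forall_not_stepRel {c : Fin m → V ⊕ H.edgeSet} {u : V} {i₀ : Fin m}
    (hi₀ : c i₀ = .inl u) (hdeg : 2 * (m - 1) < H.degree u) :
    ∃ v, H.Adj u v ∧ ∀ i, ¬ stepRel (oneSubdivision H) (c i) (.inl v) := by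
  classical
  choose s hs hreach using fun i => exists_card_le_two_of_stepRel (c i)
  have hcard : #((univ.erase i₀).biUnion s) < #(H.neighborFinset u) := calc
    #((univ.erase i₀).biUnion s) ≤ ∑ i ∈ univ.erase i₀, #(s i) := card_biUnion_le
    _ ≤ #(univ.erase i₀) * 2 := sum_le_card_nsmul _ _ _ fun i _ => hs i
    _ = 2 * (m - 1) := by simp [card_erase_of_mem, mul_comm]
    _ < #(H.neighborFinset u) := by rwa [SimpleGraph.card_neighborFinset_eq_degree]
  obtain ⟨v, hv, hvs⟩ := exists_mem_notMem_of_card_lt_card hcard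
  rw [SimpleGraph.mem_neighborFinset] at hv
  refine ⟨v, hv, fun i hi => ?_⟩
  by_cases h : i = i₀
  · subst h
    rw [hi₀, stepRel_inl_inl] at hi
    exact H.ne_of_adj hv hi
  · exact hvs (mem_biUnion.2 ⟨i, mem_erase.2 ⟨h, mem_univ i⟩, hreach i v hi⟩)


theorem RobberSafe.not_surrounds (hdeg : ∀ v, m < H.degree v)
    {c c' : Fin m → V ⊕ H.edgeSet} {x : V ⊕ H.edgeSet} (h : RobberSafe c x)
    (hc : ∀ i, stepRel (oneSubdivision H) (c i) (c' i)) :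
    ¬ Surrounds (oneSubdivision H) c' x := by
  intro hs
  rcases x with u | e
  · exact (hdeg u).not_ge (degree_le_of_surrounds hs)
  · obtain ⟨v, hv, hsafe⟩ := h
    obtain ⟨i, hi⟩ := hs (.inl v) (adj_inr_inl.2 hv)
    exact hsafe i (hi ▸ hc i)

theorem RobberSafe.exists_next (hdeg : ∀ v, 2 * (m - 1) < H.degree v)
    {c c' : Fin m → V ⊕ H.edgeSet} {x : V ⊕ H.edgeSet} (h : RobberSafe c x)
    (hc : ∀ i, stepRel (oneSubdivision H) (c i) (c' i)) :
    ∃ x', stepRel (oneSubdivision H) x x' ∧ RobberSafe c' x' := by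
  rcases x with u | e
  · by_cases hu : ∃ i, c' i = .inl u
    · obtain ⟨i₀, hi₀⟩ := hu
      obtain ⟨v, huv, hv⟩ := exists_adj_forall_not_stepRel hi₀ (hdeg u)
      exact ⟨.inr ⟨s(u, v), huv⟩, .inr (adj_inl_inr.2 (Sym2.mem_mk_left u v)),
        v, Sym2.mem_mk_right u v, hv⟩
    · push Not at hu
      exact ⟨.inl u, .inl rfl, hu⟩
  · obtain ⟨v, hv, hsafe⟩ := h
    exact ⟨.inl v, .inr (adj_inr_inl.2 hv), fun i hi => hsafe i (hi ▸ hc i)⟩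

theorem not_copsWin (hm : 0 < m) (hdeg_surround : ∀ v, m < H.degree v)
    (hdeg_flee : ∀ v, 2 * (m - 1) < H.degree v) : ¬ CopsWin (oneSubdivision H) m :=
  not_copsWin_of_invariant RobberSafe
    (fun c => let ⟨u, hu⟩ := exists_forall_ne_inl hm hdeg_surround c; ⟨.inl u, hu⟩)
    (fun _ _ h => h.ne)
    (fun _ _ _ h hc => ⟨h.not_surrounds hdeg_surround hc, h.exists_next hdeg_flee hc⟩)

end oneSubdivision

theorem subdivision_min_degree_five_needs_four_cops_general {V : Type*} [Fintype V]
    (H : SimpleGraph V) [DecidableRel H.Adj]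
    (hdeg : ∀ v : V, 5 ≤ H.degree v) :
    ¬ CopsWin (oneSubdivision H) 3 :=
  oneSubdivision.not_copsWin (by norm_num) (fun v => by linarith [hdeg v])
    (fun v => by linarith [hdeg v])

/-- Let `H` be a finite connected simple graph of minimum degree at
least `5`, and let `G` be the 1-subdivision of `H`.  Then `s(G) ≥ 4`; that is, three
cops do not suffice to surround the robber on `G`. -/
theorem subdivision_min_degree_five_needs_four_cops {V : Type*} [Fintype V]
    (H : SimpleGraph V) [DecidableRel H.Adj] (hconn : H.Connected)
    (hdeg : ∀ v : V, 5 ≤ H.degree v) :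
    ¬ CopsWin (oneSubdivision H) 3 :=
  subdivision_min_degree_five_needs_four_cops_general H hdeg
end
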